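/- arXiv:2406.11600 — 4 statements merged into one kernel-verified Lean document; each statement's English description precedes it below -/
import Mathlib

section
/- Let V be a set, X a normed real vector space, and A, B : V → X maps. Suppose A is near B, i.e., there exist α > 0 and K ∈ (0,1) with ‖B u − B v − α(A u − A v)‖ ≤ K‖B u − B v‖ for all u, v ∈ V. If B is surjective, then A is surjective. -/
theorem stmt_2 {V : Type*} {X : Type*} [NormedAddCommGroup X] [NormedSpace ℝ X]
    [CompleteSpace X]
    (A B : V → X) (α K : ℝ) (hα : 0 < α) (hK0 : 0 < K) (hK1 : K < 1)
    (hnear : ∀ u v : V, ‖B u - B v - α • (A u - A v)‖ ≤ K * ‖B u - B v‖)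
    (hB : Function.Surjective B) : Function.Surjective A := by
  intro y
  -- choose a right inverse g of B
  choose g hg using hB
  set F : X → X := fun x => x - α • A (g x) + α • y with hF
  have hlip : LipschitzWith ⟨K, hK0.le⟩ F := by
    apply LipschitzWith.of_dist_le_mul
    intro x x'
    have key := hnear (g x) (g x')
    rw [hg, hg] at key
    simp only [dist_eq_norm, hF]
    calc ‖(x - α • A (g x) + α • y) - (x' - α • A (g x') + α • y)‖
        = ‖x - x' - α • (A (g x) - A (g x'))‖ := by
          congr 1; rw [smul_sub]; abel
      _ ≤ K * ‖x - x'‖ := key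
  have hcontr : ContractingWith ⟨K, hK0.le⟩ F := ⟨by exact_mod_cast hK1, hlip⟩
  have : Nonempty X := ⟨0⟩
  obtain ⟨x, hx⟩ := hcontr.exists_fixedPoint (0 : X) (edist_ne_top _ _)
  have hfix : F x = x := hx.1
  have : α • A (g x) = α • y := by
    have := hfix
    simp only [hF] at this
    have h1 : x - α • A (g x) + α • y = x := this
    linear_combination (norm := abel) -h1
  refine ⟨g x, smul_right_injective X hα.ne' this⟩
end

section
/- Let N ≥ 1, ε ∈ (0,1), and let c : Fin N → Fin N → ℝ be a matrix with s := Σ_{i,j} (c i j)² > 0 satisfying the Cordes condition (Σ_i c i i)² / s ≥ N − 1 + ε. Then, with λ = (Σ_i c i i)/s, one has Σ_{i,j} (δ_{ij} − λ · c i j)² ≤ 1 − ε. -/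
open Finset

section

variable {ι : Type*} [Fintype ι] [DecidableEq ι]

theorem sum_sum_sq_ite_sub_mul (c : ι → ι → ℝ) (μ : ℝ) :
    ∑ i, ∑ j, ((if i = j then (1 : ℝ) else 0) - μ * c i j) ^ 2
      = Fintype.card ι - 2 * μ * ∑ k, c k k + μ ^ 2 * ∑ i, ∑ j, c i j ^ 2 := by
  have entry : ∀ i j : ι, ((if i = j then (1 : ℝ) else 0) - μ * c i j) ^ 2
      = (if i = j then 1 - 2 * μ * c i i else 0) + μ ^ 2 * c i j ^ 2 := by
    intro i j
    split_ifs with h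
    · subst h; ring
    · ring
  simp only [entry, sum_add_distrib, sum_ite_eq, mem_univ, if_true, sum_sub_distrib,
    ← mul_sum, sum_const, card_univ, nsmul_eq_mul, mul_one]

end

/-- At `μ = t / s` the quadratic `n - 2 μ t + μ² s` attains its minimum `n - t² / s`
(also for `s = 0`, where both sides are `n`). -/
theorem sub_two_mul_div_mul_add_div_sq_mul (n t s : ℝ) :
    n - 2 * (t / s) * t + (t / s) ^ 2 * s = n - t ^ 2 / s := by
  rcases eq_or_ne s 0 with rfl | hs
  · simp
  · field_simp
    ring

theorem stmt_6_general (N : ℕ) (ε : ℝ)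
    (c : Fin N → Fin N → ℝ)
    (hcordes : (∑ i, c i i) ^ 2 / (∑ i, ∑ j, (c i j) ^ 2) ≥ (N : ℝ) - 1 + ε) :
    ∑ i, ∑ j, ((if i = j then (1 : ℝ) else 0)
        - ((∑ k, c k k) / (∑ i, ∑ j, (c i j) ^ 2)) * c i j) ^ 2 ≤ 1 - ε := by
  rw [sum_sum_sq_ite_sub_mul, Fintype.card_fin, sub_two_mul_div_mul_add_div_sq_mul]
  linarith

theorem stmt_6 (N : ℕ) (hN : 1 ≤ N) (ε : ℝ) (hε0 : 0 < ε) (hε1 : ε < 1)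
    (c : Fin N → Fin N → ℝ)
    (hs : 0 < ∑ i, ∑ j, (c i j) ^ 2)
    (hcordes : (∑ i, c i i) ^ 2 / (∑ i, ∑ j, (c i j) ^ 2) ≥ (N : ℝ) - 1 + ε) :
    ∑ i, ∑ j, ((if i = j then (1 : ℝ) else 0)
        - ((∑ k, c k k) / (∑ i, ∑ j, (c i j) ^ 2)) * c i j) ^ 2 ≤ 1 - ε :=
  stmt_6_general N ε c hcordes
end

section
/- Let n ≥ 1 and let u : ℝⁿ → ℂ be a Schwartz function. Then Σ_{i,j=1}^{n} ‖∂_i ∂_j u‖²_{L²(ℝⁿ)} = ‖Δu‖²_{L²(ℝⁿ)}, where Δ = Σ_i ∂_i² is the Laplacian. In particular ‖∂_i ∂_j u‖_{L²(ℝⁿ)} ≤ ‖Δu‖_{L²(ℝⁿ)} for every pair (i,j). -/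
/-!
Integrating by parts twice and using the symmetry of second derivatives gives
`∫ ‖∂ᵢ∂ⱼu‖² = ∫ ⟪∂ᵢ²u, ∂ⱼ²u⟫` for any two directions. Summing over an orthonormal basis turns
the right-hand side into `∫ ⟪Δu, Δu⟫ = ‖Δu‖²_{L²}`, and each term of the left-hand side is bounded by
the whole sum.
-/

open MeasureTheory SchwartzMap LineDeriv Laplacian RealInnerProductSpace

namespace SchwartzMap

variable {E F : Type*} [NormedAddCommGroup E] [NormedAddCommGroup F]

section Symmetry

variable [NormedSpace ℝ E] [NormedSpace ℝ F]

theorem lineDerivOp_lineDerivOp_apply (f : 𝓢(E, F)) (v w x : E) :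
    ∂_{v} (∂_{w} f) x = fderiv ℝ (fderiv ℝ f) x v w := by
  have hf' : Differentiable ℝ (fderiv ℝ f) := (fderivCLM ℝ E F f).differentiable
  rw [lineDerivOp_apply_eq_fderiv]
  change fderiv ℝ (fun y ↦ fderiv ℝ f y w) x v = _
  simp [fderiv_clm_apply (hf' x) (differentiableAt_const w)]

theorem lineDerivOp_comm (f : 𝓢(E, F)) (v w : E) : ∂_{v} (∂_{w} f) = ∂_{w} (∂_{v} f) := by
  ext x
  simp only [lineDerivOp_lineDerivOp_apply]
  exact (f.smooth 2).contDiffAt.isSymmSndFDerivAt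
    (by simp [minSmoothness_of_isRCLikeNormedField]) v w

end Symmetry

section L2

variable [NormedSpace ℝ E] [FiniteDimensional ℝ E] [MeasurableSpace E] [BorelSpace E]
  {μ : Measure E} [μ.IsAddHaarMeasure] [InnerProductSpace ℝ F]

theorem integrable_inner (f g : 𝓢(E, F)) : Integrable (fun x ↦ ⟪f x, g x⟫) μ :=
  (pairing (innerSL ℝ) f g).integrable

theorem integral_inner_lineDerivOp_right_eq_neg_left (f g : 𝓢(E, F)) (v : E) :
    ∫ x, ⟪f x, ∂_{v} g x⟫ ∂μ = -∫ x, ⟪∂_{v} f x, g x⟫ ∂μ :=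
  integral_bilinear_lineDerivOp_right_eq_neg_left f g (innerSL ℝ) v

theorem integral_norm_sq_lineDerivOp_lineDerivOp (f : 𝓢(E, F)) (v w : E) :
    ∫ x, ‖∂_{v} (∂_{w} f) x‖ ^ 2 ∂μ = ∫ x, ⟪∂_{v} (∂_{v} f) x, ∂_{w} (∂_{w} f) x⟫ ∂μ := by
  calc ∫ x, ‖∂_{v} (∂_{w} f) x‖ ^ 2 ∂μ
      = ∫ x, ⟪∂_{v} (∂_{w} f) x, ∂_{v} (∂_{w} f) x⟫ ∂μ := by
        simp only [real_inner_self_eq_norm_sq]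
    _ = -∫ x, ⟪∂_{w} (∂_{v} (∂_{v} f)) x, ∂_{w} f x⟫ ∂μ := by
        rw [integral_inner_lineDerivOp_right_eq_neg_left _ _ v, lineDerivOp_comm f v w,
          lineDerivOp_comm (∂_{v} f) v w]
    _ = ∫ x, ⟪∂_{v} (∂_{v} f) x, ∂_{w} (∂_{w} f) x⟫ ∂μ :=
        (integral_inner_lineDerivOp_right_eq_neg_left _ _ w).symm

end L2

section Laplacian

variable [InnerProductSpace ℝ E] [FiniteDimensional ℝ E] [MeasurableSpace E] [BorelSpace E]
  {μ : Measure E} [μ.IsAddHaarMeasure] [InnerProductSpace ℝ F]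

theorem sum_integral_norm_sq_lineDerivOp_lineDerivOp {ι : Type*} [Fintype ι]
    (b : OrthonormalBasis ι ℝ E) (f : 𝓢(E, F)) :
    ∑ i, ∑ j, ∫ x, ‖∂_{b i} (∂_{b j} f) x‖ ^ 2 ∂μ = ∫ x, ‖Δ f x‖ ^ 2 ∂μ := by
  simp_rw [integral_norm_sq_lineDerivOp_lineDerivOp]
  calc ∑ i, ∑ j, ∫ x, ⟪∂_{b i} (∂_{b i} f) x, ∂_{b j} (∂_{b j} f) x⟫ ∂μ
      = ∫ x, ∑ i, ∑ j, ⟪∂_{b i} (∂_{b i} f) x, ∂_{b j} (∂_{b j} f) x⟫ ∂μ := by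
        rw [integral_finsetSum _ fun i _ ↦ integrable_finsetSum _ fun j _ ↦ integrable_inner _ _]
        simp_rw [integral_finsetSum _ fun j _ ↦ integrable_inner _ _]
    _ = ∫ x, ‖Δ f x‖ ^ 2 ∂μ := by
        simp_rw [laplacian_eq_sum b f, sum_apply, ← real_inner_self_eq_norm_sq, sum_inner,
          inner_sum]

end Laplacian

end SchwartzMap

theorem stmt_10_general (n : ℕ) (u : SchwartzMap (EuclideanSpace ℝ (Fin n)) ℂ) :
    (∑ i : Fin n, ∑ j : Fin n,
        ∫ x : EuclideanSpace ℝ (Fin n),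
          ‖fderiv ℝ (fun y => fderiv ℝ (⇑u) y (EuclideanSpace.single j 1)) x
              (EuclideanSpace.single i 1)‖ ^ 2)
      = (∫ x : EuclideanSpace ℝ (Fin n),
          ‖∑ i : Fin n,
              fderiv ℝ (fun y => fderiv ℝ (⇑u) y (EuclideanSpace.single i 1)) x
                (EuclideanSpace.single i 1)‖ ^ 2) ∧
    ∀ i j : Fin n,
      Real.sqrt (∫ x : EuclideanSpace ℝ (Fin n),
          ‖fderiv ℝ (fun y => fderiv ℝ (⇑u) y (EuclideanSpace.single j 1)) x
              (EuclideanSpace.single i 1)‖ ^ 2)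
        ≤ Real.sqrt (∫ x : EuclideanSpace ℝ (Fin n),
            ‖∑ i : Fin n,
                fderiv ℝ (fun y => fderiv ℝ (⇑u) y (EuclideanSpace.single i 1)) x
                  (EuclideanSpace.single i 1)‖ ^ 2) := by
  set b := EuclideanSpace.basisFun (Fin n) ℝ
  have hpartial (i j : Fin n) (x : EuclideanSpace ℝ (Fin n)) :
      fderiv ℝ (fun y => fderiv ℝ (⇑u) y (EuclideanSpace.single j 1)) x
        (EuclideanSpace.single i 1) = ∂_{b i} (∂_{b j} u) x := by
    simp only [b, EuclideanSpace.basisFun_apply]; rfl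
  have hlaplacian (x : EuclideanSpace ℝ (Fin n)) : ∑ i, ∂_{b i} (∂_{b i} u) x = Δ u x := by
    rw [laplacian_eq_sum b u, sum_apply]
  simp only [hpartial, hlaplacian]
  have hsum := sum_integral_norm_sq_lineDerivOp_lineDerivOp b u (μ := volume)
  refine ⟨hsum, fun i j ↦ Real.sqrt_le_sqrt ?_⟩
  have hnonneg (k l : Fin n) : 0 ≤ ∫ x, ‖∂_{b k} (∂_{b l} u) x‖ ^ 2 :=
    integral_nonneg fun x ↦ sq_nonneg _
  rw [← hsum]
  calc ∫ x, ‖∂_{b i} (∂_{b j} u) x‖ ^ 2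
      ≤ ∑ l, ∫ x, ‖∂_{b i} (∂_{b l} u) x‖ ^ 2 :=
        Finset.single_le_sum (fun l _ ↦ hnonneg i l) (Finset.mem_univ j)
    _ ≤ ∑ k, ∑ l, ∫ x, ‖∂_{b k} (∂_{b l} u) x‖ ^ 2 :=
        Finset.single_le_sum (fun k _ ↦ Finset.sum_nonneg fun l _ ↦ hnonneg k l)
          (Finset.mem_univ i)

theorem stmt_10 (n : ℕ) (hn : 1 ≤ n) (u : SchwartzMap (EuclideanSpace ℝ (Fin n)) ℂ) :
    (∑ i : Fin n, ∑ j : Fin n,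
        ∫ x : EuclideanSpace ℝ (Fin n),
          ‖fderiv ℝ (fun y => fderiv ℝ (⇑u) y (EuclideanSpace.single j 1)) x
              (EuclideanSpace.single i 1)‖ ^ 2)
      = (∫ x : EuclideanSpace ℝ (Fin n),
          ‖∑ i : Fin n,
              fderiv ℝ (fun y => fderiv ℝ (⇑u) y (EuclideanSpace.single i 1)) x
                (EuclideanSpace.single i 1)‖ ^ 2) ∧
    ∀ i j : Fin n,
      Real.sqrt (∫ x : EuclideanSpace ℝ (Fin n),
          ‖fderiv ℝ (fun y => fderiv ℝ (⇑u) y (EuclideanSpace.single j 1)) x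
              (EuclideanSpace.single i 1)‖ ^ 2)
        ≤ Real.sqrt (∫ x : EuclideanSpace ℝ (Fin n),
            ‖∑ i : Fin n,
                fderiv ℝ (fun y => fderiv ℝ (⇑u) y (EuclideanSpace.single i 1)) x
                  (EuclideanSpace.single i 1)‖ ^ 2) :=
  stmt_10_general n u
end

section
/- Let V be a set, X a real Banach space, B : V → X a bijection, and A : V → X near B with constants α > 0, K ∈ (0,1), i.e., ‖B u − B v − α(A u − A v)‖ ≤ K‖B u − B v‖ for all u, v ∈ V. Then A is a bijection; in particular, for every f ∈ X there exists a unique u ∈ V with A u = f. -/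
theorem stmt_19 {V : Type*} {X : Type*} [NormedAddCommGroup X] [NormedSpace ℝ X]
    [CompleteSpace X]
    (A B : V → X) (hB : Function.Bijective B) (α K : ℝ)
    (hα : 0 < α) (hK0 : 0 < K) (hK1 : K < 1)
    (hnear : ∀ u v : V, ‖B u - B v - α • (A u - A v)‖ ≤ K * ‖B u - B v‖) :
    Function.Bijective A ∧ ∀ f : X, ∃! u : V, A u = f := by
  have hAinj : Function.Injective A := by
    intro u v h
    have h1 := hnear u v
    rw [h, sub_self, smul_zero, sub_zero] at h1
    have hz : ‖B u - B v‖ = 0 := by nlinarith [norm_nonneg (B u - B v)]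
    exact hB.1 (sub_eq_zero.mp (norm_eq_zero.mp hz))
  have hAsurj : Function.Surjective A := by
    intro f
    set e := Equiv.ofBijective B hB with he
    set T : X → X := fun x => x - α • A (e.symm x) + α • f with hT
    have lip : LipschitzWith ⟨K, hK0.le⟩ T := by
      apply LipschitzWith.of_dist_le_mul
      intro x y
      have hdiff : T x - T y = B (e.symm x) - B (e.symm y)
          - α • (A (e.symm x) - A (e.symm y)) := by
        simp only [hT, he, Equiv.ofBijective_apply_symm_apply, smul_sub]
        abel
      have hb : B (e.symm x) - B (e.symm y) = x - y := by
        simp [he, Equiv.ofBijective_apply_symm_apply]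
      calc dist (T x) (T y) = ‖T x - T y‖ := dist_eq_norm _ _
        _ ≤ K * ‖B (e.symm x) - B (e.symm y)‖ := by rw [hdiff]; exact hnear _ _
        _ = K * dist x y := by rw [hb, dist_eq_norm]
    have hc : ContractingWith ⟨K, hK0.le⟩ T := ⟨by exact_mod_cast hK1, lip⟩
    have hfix : T (ContractingWith.fixedPoint T hc) = ContractingWith.fixedPoint T hc :=
      hc.fixedPoint_isFixedPt
    set x := ContractingWith.fixedPoint T hc
    refine ⟨e.symm x, ?_⟩
    have : α • f = α • A (e.symm x) := by
      have := hfix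
      simp only [hT] at this
      have h2 : α • f - α • A (e.symm x) = 0 := by
        have : x - α • A (e.symm x) + α • f = x := this
        linear_combination (norm := abel_nf) this
      exact sub_eq_zero.mp h2
    have := smul_right_injective X (ne_of_gt hα) this
    exact this.symm
  exact ⟨⟨hAinj, hAsurj⟩, fun f => (hAsurj f).imp (fun u hu => ⟨hu, fun v hv => hAinj (hv.trans hu.symm)⟩)⟩
end
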